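/- arXiv:1901.07522 — 2 statements merged into one kernel-verified Lean document; each statement's English description precedes it below -/
import Mathlib

section
/- Under the hypotheses of the previous setting (a vector space X with linear maps Φ_x : H_n → X satisfying the projection and composition rules), the partial order x ≤ y ⇔ σ(x,y) = y makes X a vector lattice: every pair (x,y) has supremum σ(x,y), the order is translation-invariant, and it is invariant under multiplication by nonnegative scalars. Moreover each Φ_x is then a vector lattice homomorphism. -/
/-- `H_n`: positively homogeneous continuous functions `ℝⁿ → ℝ`. -/
def MemHn {n : ℕ} (f : (Fin n → ℝ) → ℝ) : Prop :=
  Continuous f ∧ ∀ (c : ℝ), 0 ≤ c → ∀ t, f (c • t) = c * f t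

/-- the `i`-th coordinate projection, an element of `H_n`. -/
def projFn (n : ℕ) (i : Fin n) : (Fin n → ℝ) → ℝ := fun t => t i

section VL
variable {X : Type*} [Lattice X] [AddCommGroup X] [Module ℝ X]

/-- A vector lattice homomorphism `H_n → X`, encoded as a map on all functions
that is linear and sup-preserving on members of `H_n`. -/
def IsVLHomHn {n : ℕ} (Φ : ((Fin n → ℝ) → ℝ) → X) : Prop :=
  (∀ f g, MemHn f → MemHn g → Φ (f + g) = Φ f + Φ g) ∧
  (∀ (c : ℝ) f, MemHn f → Φ (c • f) = c • Φ f) ∧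
  (∀ f g, MemHn f → MemHn g → Φ (f ⊔ g) = Φ f ⊔ Φ g)

/-- The order ideal generated by `e`. -/
def Ie (e : X) : Set X := {x | ∃ l : ℝ, 0 ≤ l ∧ |x| ≤ l • e}

/-- `‖x‖_e = inf {λ ≥ 0 : |x| ≤ λ e}`. -/
noncomputable def enorm (e x : X) : ℝ := sInf {l : ℝ | 0 ≤ l ∧ |x| ≤ l • e}

/-- A sublattice and linear subspace. -/
def IsSubl (S : Set X) : Prop :=
  (0 : X) ∈ S ∧ (∀ a ∈ S, ∀ b ∈ S, a + b ∈ S) ∧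
  (∀ (c : ℝ), ∀ a ∈ S, c • a ∈ S) ∧ (∀ a ∈ S, ∀ b ∈ S, a ⊔ b ∈ S)

/-- `S` is closed in the carrier `C` with respect to the `‖·‖_e`-distance. -/
def ClosedIn (e : X) (C S : Set X) : Prop :=
  ∀ x ∈ C, (∀ ε : ℝ, 0 < ε → ∃ y ∈ S, enorm e (x - y) < ε) → x ∈ S

/-- The closed sublattice of `C` generated by the set `A`. -/
def genClosedSubl (e : X) (C A : Set X) : Set X :=
  ⋂₀ {S : Set X | S ⊆ C ∧ A ⊆ S ∧ IsSubl S ∧ ClosedIn e C S}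

/-- The norm `‖·‖_e` is complete on `S`: every `‖·‖_e`-Cauchy sequence in `S`
converges, in `‖·‖_e`, to an element of `S`. -/
def CompleteOn (e : X) (S : Set X) : Prop :=
  ∀ u : ℕ → X, (∀ k, u k ∈ S) →
    (∀ ε : ℝ, 0 < ε → ∃ N, ∀ m ≥ N, ∀ n ≥ N, enorm e (u m - u n) < ε) →
    ∃ x ∈ S, ∀ ε : ℝ, 0 < ε → ∃ N, ∀ m ≥ N, enorm e (u m - x) < ε

end VL

/-- An Archimedean vector lattice. -/
def IsArchimedeanVL (X : Type*) [Lattice X] [AddCommGroup X] : Prop :=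
  ∀ x y : X, 0 ≤ x → 0 ≤ y → (∀ n : ℕ, n • x ≤ y) → x = 0

/-- The pointwise-maximum function `σ(t₁,t₂) = t₁ ∨ t₂`, an element of `H₂`. -/
noncomputable def sigmaMax : (Fin 2 → ℝ) → ℝ := fun t => max (t 0) (t 1)

/-! By the composition rule, `σ(Φ_v f, Φ_v g) = Φ_v (f ⊔ g)` for `f g ∈ H_n`. Writing the
elements involved as `x = Φ_v π₀, y = Φ_v π₁, z = Φ_v π₂` with `v = (x, y, z)` (projection rule),
each claim becomes the image under `Φ_v` of an identity in the lattice-ordered space of functions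
`ℝⁿ → ℝ`, such as `(π₀ + π₂) ⊔ (π₁ + π₂) = (π₀ ⊔ π₁) + π₂`. -/

lemma memHn_projFn (n : ℕ) (i : Fin n) : MemHn (projFn n i) :=
  ⟨continuous_apply i, fun _ _ _ => rfl⟩

namespace MemHn

variable {n : ℕ} {f g : (Fin n → ℝ) → ℝ}

lemma sup (hf : MemHn f) (hg : MemHn g) : MemHn (f ⊔ g) :=
  ⟨hf.1.sup hg.1, fun c hc t => by
    simp only [Pi.sup_apply, hf.2 c hc, hg.2 c hc, mul_max_of_nonneg _ _ hc]⟩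

lemma add (hf : MemHn f) (hg : MemHn g) : MemHn (f + g) :=
  ⟨hf.1.add hg.1, fun c hc t => by simp only [Pi.add_apply, hf.2 c hc, hg.2 c hc, mul_add]⟩

lemma const_smul (c : ℝ) (hf : MemHn f) : MemHn (c • f) :=
  ⟨hf.1.const_smul c, fun d hd t => by
    simp only [Pi.smul_apply, hf.2 d hd, smul_eq_mul, mul_left_comm]⟩

end MemHn

lemma memHn_sigmaMax : MemHn sigmaMax := (memHn_projFn 2 0).sup (memHn_projFn 2 1)

section SigmaOrder

variable {X : Type*}

def ProjRule (Φ : ∀ n : ℕ, (Fin n → X) → ((Fin n → ℝ) → ℝ) → X) : Prop :=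
  ∀ (n : ℕ) (x : Fin n → X) (i : Fin n), Φ n x (projFn n i) = x i

def CompRule (Φ : ∀ n : ℕ, (Fin n → X) → ((Fin n → ℝ) → ℝ) → X) : Prop :=
  ∀ (m n : ℕ) (x : Fin n → X) (f : Fin m → ((Fin n → ℝ) → ℝ)) (g : (Fin m → ℝ) → ℝ),
    (∀ i, MemHn (f i)) → MemHn g →
      Φ m (fun i => Φ n x (f i)) g = Φ n x (fun t => g (fun i => f i t))

def SigmaLE (Φ : ∀ n : ℕ, (Fin n → X) → ((Fin n → ℝ) → ℝ) → X) (x y : X) : Prop :=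
  Φ 2 ![x, y] sigmaMax = y

variable {Φ : ∀ n : ℕ, (Fin n → X) → ((Fin n → ℝ) → ℝ) → X}

section Functional

variable {n : ℕ} (v : Fin n → X) {f g h : (Fin n → ℝ) → ℝ}

lemma sigmaMax_phi (hcomp : CompRule Φ) (hf : MemHn f) (hg : MemHn g) :
    Φ 2 ![Φ n v f, Φ n v g] sigmaMax = Φ n v (f ⊔ g) := by
  convert hcomp 2 n v ![f, g] sigmaMax (Fin.forall_fin_two.2 ⟨hf, hg⟩) memHn_sigmaMax using 2
  · ext i; fin_cases i <;> rfl
  · rfl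

lemma sigmaLE_phi_iff (hcomp : CompRule Φ) (hf : MemHn f) (hg : MemHn g) :
    SigmaLE Φ (Φ n v f) (Φ n v g) ↔ Φ n v (f ⊔ g) = Φ n v g := by
  rw [SigmaLE, sigmaMax_phi v hcomp hf hg]

lemma sigmaLE_phi_of_le (hcomp : CompRule Φ) (hf : MemHn f) (hg : MemHn g) (hfg : f ≤ g) :
    SigmaLE Φ (Φ n v f) (Φ n v g) := by
  rw [sigmaLE_phi_iff v hcomp hf hg, sup_eq_right.2 hfg]

lemma sigmaLE_phi_sup (hcomp : CompRule Φ) (hf : MemHn f) (hg : MemHn g) (hh : MemHn h)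
    (hfh : SigmaLE Φ (Φ n v f) (Φ n v h)) (hgh : SigmaLE Φ (Φ n v g) (Φ n v h)) :
    SigmaLE Φ (Φ n v (f ⊔ g)) (Φ n v h) := by
  rw [sigmaLE_phi_iff v hcomp hf hh] at hfh
  rw [sigmaLE_phi_iff v hcomp hg hh] at hgh
  rw [sigmaLE_phi_iff v hcomp (hf.sup hg) hh, sup_assoc, ← sigmaMax_phi v hcomp hf (hg.sup hh),
    hgh, sigmaMax_phi v hcomp hf hh, hfh]

end Functional

lemma sigmaLE_sigmaMax_left (hproj : ProjRule Φ) (hcomp : CompRule Φ) (x y : X) :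
    SigmaLE Φ x (Φ 2 ![x, y] sigmaMax) := by
  obtain ⟨v, rfl, rfl⟩ : ∃ v : Fin 2 → X, Φ 2 v (projFn 2 0) = x ∧ Φ 2 v (projFn 2 1) = y :=
    ⟨![x, y], hproj 2 _ 0, hproj 2 _ 1⟩
  rw [sigmaMax_phi v hcomp (memHn_projFn 2 0) (memHn_projFn 2 1)]
  exact sigmaLE_phi_of_le v hcomp (memHn_projFn 2 0) ((memHn_projFn 2 0).sup (memHn_projFn 2 1))
    le_sup_left

lemma sigmaLE_sigmaMax_right (hproj : ProjRule Φ) (hcomp : CompRule Φ) (x y : X) :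
    SigmaLE Φ y (Φ 2 ![x, y] sigmaMax) := by
  obtain ⟨v, rfl, rfl⟩ : ∃ v : Fin 2 → X, Φ 2 v (projFn 2 0) = x ∧ Φ 2 v (projFn 2 1) = y :=
    ⟨![x, y], hproj 2 _ 0, hproj 2 _ 1⟩
  rw [sigmaMax_phi v hcomp (memHn_projFn 2 0) (memHn_projFn 2 1)]
  exact sigmaLE_phi_of_le v hcomp (memHn_projFn 2 1) ((memHn_projFn 2 0).sup (memHn_projFn 2 1))
    le_sup_right

lemma sigmaMax_sigmaLE (hproj : ProjRule Φ) (hcomp : CompRule Φ) {x y z : X}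
    (hxz : SigmaLE Φ x z) (hyz : SigmaLE Φ y z) : SigmaLE Φ (Φ 2 ![x, y] sigmaMax) z := by
  obtain ⟨v, rfl, rfl, rfl⟩ : ∃ v : Fin 3 → X, Φ 3 v (projFn 3 0) = x ∧
      Φ 3 v (projFn 3 1) = y ∧ Φ 3 v (projFn 3 2) = z :=
    ⟨![x, y, z], hproj 3 _ 0, hproj 3 _ 1, hproj 3 _ 2⟩
  rw [sigmaMax_phi v hcomp (memHn_projFn 3 0) (memHn_projFn 3 1)]
  exact sigmaLE_phi_sup v hcomp (memHn_projFn 3 0) (memHn_projFn 3 1) (memHn_projFn 3 2) hxz hyz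

lemma SigmaLE.add_right [Add X]
    (hadd : ∀ (n : ℕ) (x : Fin n → X) (f g : (Fin n → ℝ) → ℝ),
      MemHn f → MemHn g → Φ n x (f + g) = Φ n x f + Φ n x g)
    (hproj : ProjRule Φ) (hcomp : CompRule Φ) {x y : X} (z : X) (hxy : SigmaLE Φ x y) :
    SigmaLE Φ (x + z) (y + z) := by
  obtain ⟨v, rfl, rfl, rfl⟩ : ∃ v : Fin 3 → X, Φ 3 v (projFn 3 0) = x ∧
      Φ 3 v (projFn 3 1) = y ∧ Φ 3 v (projFn 3 2) = z :=
    ⟨![x, y, z], hproj 3 _ 0, hproj 3 _ 1, hproj 3 _ 2⟩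
  have h₀ := memHn_projFn 3 0
  have h₁ := memHn_projFn 3 1
  have h₂ := memHn_projFn 3 2
  rw [sigmaLE_phi_iff v hcomp h₀ h₁] at hxy
  rw [← hadd 3 v _ _ h₀ h₂, ← hadd 3 v _ _ h₁ h₂, sigmaLE_phi_iff v hcomp (h₀.add h₂) (h₁.add h₂),
    ← sup_add, hadd 3 v _ _ (h₀.sup h₁) h₂, hxy, hadd 3 v _ _ h₁ h₂]

lemma SigmaLE.smul_of_nonneg [SMul ℝ X]
    (hsmul : ∀ (n : ℕ) (x : Fin n → X) (c : ℝ) (f : (Fin n → ℝ) → ℝ),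
      MemHn f → Φ n x (c • f) = c • Φ n x f)
    (hproj : ProjRule Φ) (hcomp : CompRule Φ) {c : ℝ} (hc : 0 ≤ c) {x y : X}
    (hxy : SigmaLE Φ x y) : SigmaLE Φ (c • x) (c • y) := by
  obtain ⟨v, rfl, rfl⟩ : ∃ v : Fin 2 → X, Φ 2 v (projFn 2 0) = x ∧ Φ 2 v (projFn 2 1) = y :=
    ⟨![x, y], hproj 2 _ 0, hproj 2 _ 1⟩
  have h₀ := memHn_projFn 2 0
  have h₁ := memHn_projFn 2 1
  have smul_sup : c • projFn 2 0 ⊔ c • projFn 2 1 = c • (projFn 2 0 ⊔ projFn 2 1) :=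
    funext fun t => (mul_max_of_nonneg _ _ hc).symm
  rw [sigmaLE_phi_iff v hcomp h₀ h₁] at hxy
  rw [← hsmul 2 v c _ h₀, ← hsmul 2 v c _ h₁,
    sigmaLE_phi_iff v hcomp (h₀.const_smul c) (h₁.const_smul c), smul_sup,
    hsmul 2 v c _ (h₀.sup h₁), hxy, hsmul 2 v c _ h₁]

end SigmaOrder

/-- under the projection and composition rules, the partial order
`x ≤ y ⇔ σ(x,y) = y` makes `X` a vector lattice: `σ(x,y)` is the supremum of
`x` and `y`, the order is translation-invariant and invariant under
multiplication by non-negative scalars, and each `Φ_x` is a vector lattice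
homomorphism. -/
theorem stmt11 {X : Type*} [AddCommGroup X] [Module ℝ X]
    (Φ : ∀ n : ℕ, (Fin n → X) → ((Fin n → ℝ) → ℝ) → X)
    (hadd : ∀ (n : ℕ) (x : Fin n → X) (f g : (Fin n → ℝ) → ℝ),
      MemHn f → MemHn g → Φ n x (f + g) = Φ n x f + Φ n x g)
    (hsmul : ∀ (n : ℕ) (x : Fin n → X) (c : ℝ) (f : (Fin n → ℝ) → ℝ),
      MemHn f → Φ n x (c • f) = c • Φ n x f)
    (hproj : ∀ (n : ℕ) (x : Fin n → X) (i : Fin n), Φ n x (projFn n i) = x i)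
    (hcomp : ∀ (m n : ℕ) (x : Fin n → X) (f : Fin m → ((Fin n → ℝ) → ℝ))
      (g : (Fin m → ℝ) → ℝ), (∀ i, MemHn (f i)) → MemHn g →
      Φ m (fun i => Φ n x (f i)) g = Φ n x (fun t => g (fun i => f i t)))
    -- the order `x ≤ y ⇔ σ(x,y) = y` :
    (r : X → X → Prop) (hr : ∀ x y, r x y ↔ Φ 2 ![x, y] sigmaMax = y) :
    -- `σ(x,y)` is the supremum of the pair `(x,y)`:
    (∀ x y : X, r x (Φ 2 ![x, y] sigmaMax) ∧ r y (Φ 2 ![x, y] sigmaMax) ∧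
      ∀ z : X, r x z → r y z → r (Φ 2 ![x, y] sigmaMax) z) ∧
    -- translation invariance:
    (∀ x y z : X, r x y → r (x + z) (y + z)) ∧
    -- invariance under multiplication by nonnegative scalars:
    (∀ (c : ℝ) (x y : X), 0 ≤ c → r x y → r (c • x) (c • y)) ∧
    -- each `Φ_x` is a vector lattice homomorphism:
    (∀ (n : ℕ) (x : Fin n → X) (f g : (Fin n → ℝ) → ℝ), MemHn f → MemHn g →
      Φ n x (f ⊔ g) = Φ 2 ![Φ n x f, Φ n x g] sigmaMax) := by
  obtain rfl : r = SigmaLE Φ := funext₂ fun x y => propext (hr x y)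
  exact ⟨fun x y => ⟨sigmaLE_sigmaMax_left hproj hcomp x y, sigmaLE_sigmaMax_right hproj hcomp x y,
      fun _ => sigmaMax_sigmaLE hproj hcomp⟩,
    fun _ _ z => SigmaLE.add_right hadd hproj hcomp z,
    fun _ _ _ hc => SigmaLE.smul_of_nonneg hsmul hproj hcomp hc,
    fun n x _ _ hf hg => (sigmaMax_phi x hcomp hf hg).symm⟩
end

section
/- Let X = ℝ² with the lexicographic order: (s₁,s₂) ≤ (t₁,t₂) iff s₁ < t₁, or s₁ = t₁ and s₂ ≤ t₂. Set x₁ = (1,0) and x₂ = (0,1). Then X is a non-Archimedean vector lattice, and there exists no vector lattice homomorphism Φ : H₂ → X with Φ(π₁) = x₁ and Φ(π₂) = x₂. In particular, X admits no positively homogeneous continuous function calculus. -/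
/-- The lexicographic order on `ℝ²`. -/
def lexLe (a b : ℝ × ℝ) : Prop := a.1 < b.1 ∨ (a.1 = b.1 ∧ a.2 ≤ b.2)

open Classical in
/-- The supremum for the lexicographic (linear) order on `ℝ²`. -/
noncomputable def lexSup (a b : ℝ × ℝ) : ℝ × ℝ := if lexLe a b then b else a


section Stmt19Aux

lemma memHn_proj {n : ℕ} (i : Fin n) : MemHn (projFn n i) := by
  refine ⟨continuous_apply i, ?_⟩
  intro c _ t
  simp [projFn]

lemma memHn_zero {n : ℕ} : MemHn (0 : (Fin n → ℝ) → ℝ) := by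
  refine ⟨continuous_const, ?_⟩
  intro c _ t; simp

lemma memHn_add {n : ℕ} {f g : (Fin n → ℝ) → ℝ} (hf : MemHn f) (hg : MemHn g) :
    MemHn (f + g) := by
  refine ⟨hf.1.add hg.1, ?_⟩
  intro c hc t
  simp only [Pi.add_apply, hf.2 c hc t, hg.2 c hc t, mul_add]

lemma memHn_smul {n : ℕ} (c : ℝ) {f : (Fin n → ℝ) → ℝ} (hf : MemHn f) :
    MemHn (c • f) := by
  refine ⟨hf.1.const_smul c, ?_⟩
  intro d hd t
  simp only [Pi.smul_apply, smul_eq_mul, hf.2 d hd t]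
  ring

lemma memHn_sup {n : ℕ} {f g : (Fin n → ℝ) → ℝ} (hf : MemHn f) (hg : MemHn g) :
    MemHn (f ⊔ g) := by
  constructor
  · exact hf.1.max hg.1
  · intro c hc t
    show f (c • t) ⊔ g (c • t) = c * (f t ⊔ g t)
    rw [hf.2 c hc t, hg.2 c hc t]
    rcases le_total (f t) (g t) with h | h
    · rw [max_eq_right h, max_eq_right (by nlinarith)]
    · rw [max_eq_left h, max_eq_left (by nlinarith)]

end Stmt19Aux

/-- `X = ℝ²` with the lexicographic order is a (totally ordered,
hence lattice-ordered) non-Archimedean vector lattice, and there is no vector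
lattice homomorphism `Φ : H₂ → X` with `Φ(π₁) = (1,0)` and `Φ(π₂) = (0,1)`;
in particular `X` admits no positively homogeneous continuous function
calculus. -/
theorem stmt19 :
    -- the lexicographic order makes `ℝ²` a vector lattice (indeed a totally
    -- ordered vector space):
    ((∀ a : ℝ × ℝ, lexLe a a) ∧
     (∀ a b : ℝ × ℝ, lexLe a b → lexLe b a → a = b) ∧
     (∀ a b c : ℝ × ℝ, lexLe a b → lexLe b c → lexLe a c) ∧
     (∀ a b : ℝ × ℝ, lexLe a b ∨ lexLe b a) ∧
     (∀ a b c : ℝ × ℝ, lexLe a b → lexLe (a + c) (b + c)) ∧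
     (∀ (l : ℝ) (a b : ℝ × ℝ), 0 ≤ l → lexLe a b → lexLe (l • a) (l • b))) ∧
    -- it is non-Archimedean, as witnessed by `x₁ = (1,0)`, `x₂ = (0,1)`:
    (lexLe 0 ((1, 0) : ℝ × ℝ) ∧ lexLe 0 ((0, 1) : ℝ × ℝ) ∧
      ((0, 1) : ℝ × ℝ) ≠ 0 ∧
      ∀ n : ℕ, lexLe (n • ((0, 1) : ℝ × ℝ)) ((1, 0) : ℝ × ℝ)) ∧
    -- and there is no vector lattice homomorphism `Φ : H₂ → X` with
    -- `Φ(π₁) = x₁` and `Φ(π₂) = x₂`: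
    ¬ ∃ Φ : ((Fin 2 → ℝ) → ℝ) → ℝ × ℝ,
        (∀ f g : (Fin 2 → ℝ) → ℝ, MemHn f → MemHn g →
          Φ (f + g) = Φ f + Φ g) ∧
        (∀ (c : ℝ) (f : (Fin 2 → ℝ) → ℝ), MemHn f → Φ (c • f) = c • Φ f) ∧
        (∀ f g : (Fin 2 → ℝ) → ℝ, MemHn f → MemHn g →
          Φ (f ⊔ g) = lexSup (Φ f) (Φ g)) ∧
        Φ (projFn 2 0) = ((1, 0) : ℝ × ℝ) ∧
        Φ (projFn 2 1) = ((0, 1) : ℝ × ℝ) := by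
  constructor
  · refine ⟨?_, ?_, ?_, ?_, ?_, ?_⟩
    · intro a; exact Or.inr ⟨rfl, le_rfl⟩
    · intro a b hab hba
      rcases hab with h | ⟨h1, h2⟩ <;> rcases hba with h' | ⟨h1', h2'⟩
      · exact absurd (lt_trans h h') (lt_irrefl _)
      · rw [h1'] at h; exact absurd h (lt_irrefl _)
      · rw [h1] at h'; exact absurd h' (lt_irrefl _)
      · exact Prod.ext h1 (le_antisymm h2 h2')
    · intro a b c hab hbc
      rcases hab with h | ⟨h1, h2⟩ <;> rcases hbc with h' | ⟨h1', h2'⟩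
      · exact Or.inl (lt_trans h h')
      · exact Or.inl (h1' ▸ h)
      · exact Or.inl (h1 ▸ h')
      · exact Or.inr ⟨h1.trans h1', le_trans h2 h2'⟩
    · intro a b
      rcases lt_trichotomy a.1 b.1 with h | h | h
      · exact Or.inl (Or.inl h)
      · rcases le_total a.2 b.2 with h2 | h2
        · exact Or.inl (Or.inr ⟨h, h2⟩)
        · exact Or.inr (Or.inr ⟨h.symm, h2⟩)
      · exact Or.inr (Or.inl h)
    · intro a b c h
      rcases h with h | ⟨h1, h2⟩
      · exact Or.inl (by simpa using add_lt_add_right h c.1)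
      · exact Or.inr ⟨by simp [h1], by simpa using add_le_add_right h2 c.2⟩
    · intro l a b hl h
      rcases eq_or_lt_of_le hl with hl0 | hl'
      · rw [← hl0, zero_smul, zero_smul]
        exact Or.inr ⟨rfl, le_rfl⟩
      · rcases h with h | ⟨h1, h2⟩
        · exact Or.inl (by
            simp only [Prod.smul_fst, smul_eq_mul]
            exact mul_lt_mul_of_pos_left h hl')
        · exact Or.inr ⟨by simp [h1], by
            simp only [Prod.smul_snd, smul_eq_mul]
            exact mul_le_mul_of_nonneg_left h2 hl⟩
  constructor
  · refine ⟨Or.inl (by norm_num), Or.inr ⟨by norm_num, by norm_num⟩, ?_, ?_⟩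
    · intro h
      rw [Prod.ext_iff] at h
      exact one_ne_zero h.2
    · intro n
      refine Or.inl ?_
      show (n • ((0, 1) : ℝ × ℝ)).1 < 1
      simp
  rintro ⟨Φ, hadd, hsmul, hsup, hp1, hp2⟩
  have hmP1 : MemHn (projFn 2 0) := memHn_proj 0
  have hmP2 : MemHn (projFn 2 1) := memHn_proj 1
  have hm0 : MemHn (0 : (Fin 2 → ℝ) → ℝ) := memHn_zero
  have hΦ0 : Φ 0 = 0 := by
    have h := hsmul 0 (projFn 2 0) hmP1
    rwa [zero_smul, zero_smul] at h
  -- monotonicity of Φ w.r.t. pointwise order and lexLe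
  have hmono : ∀ f g : (Fin 2 → ℝ) → ℝ, MemHn f → MemHn g → (∀ t, f t ≤ g t) →
      lexLe (Φ f) (Φ g) := by
    intro f g hf hg hle
    have hfg : f ⊔ g = g := by
      funext t
      exact sup_eq_right.mpr (hle t)
    have h := hsup f g hf hg
    rw [hfg] at h
    by_cases hc : lexLe (Φ f) (Φ g)
    · exact hc
    · rw [lexSup, if_neg hc] at h
      rw [h]
      exact Or.inr ⟨rfl, le_rfl⟩
  -- positive parts of the projections
  set Q1 : (Fin 2 → ℝ) → ℝ := projFn 2 0 ⊔ 0 with hQ1def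
  set Q2 : (Fin 2 → ℝ) → ℝ := projFn 2 1 ⊔ 0 with hQ2def
  have hmQ1 : MemHn Q1 := memHn_sup hmP1 hm0
  have hmQ2 : MemHn Q2 := memHn_sup hmP2 hm0
  have hQ1t : ∀ t : Fin 2 → ℝ, Q1 t = max (t 0) 0 := by
    intro t; rw [hQ1def]; rfl
  have hQ2t : ∀ t : Fin 2 → ℝ, Q2 t = max (t 1) 0 := by
    intro t; rw [hQ2def]; rfl
  have hΦQ1 : Φ Q1 = ((1, 0) : ℝ × ℝ) := by
    have h := hsup (projFn 2 0) 0 hmP1 hm0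
    rw [hΦ0, hp1] at h
    rw [hQ1def, h, lexSup, if_neg]
    intro hc
    rcases hc with hc | ⟨hc, _⟩ <;> norm_num at hc
  have hΦQ2 : Φ Q2 = ((0, 1) : ℝ × ℝ) := by
    have h := hsup (projFn 2 1) 0 hmP2 hm0
    rw [hΦ0, hp2] at h
    rw [hQ2def, h, lexSup, if_neg]
    intro hc
    rcases hc with hc | ⟨_, hc⟩ <;> norm_num at hc
  -- the square-root function
  set F : (Fin 2 → ℝ) → ℝ := fun t => Real.sqrt (max (t 0) 0 * max (t 1) 0) with hFdef
  have hmF : MemHn F := by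
    constructor
    · exact Real.continuous_sqrt.comp
        (((continuous_apply (0 : Fin 2)).max continuous_const).mul
          ((continuous_apply (1 : Fin 2)).max continuous_const))
    · intro c hc t
      have e : ∀ x : ℝ, max (c * x) 0 = c * max x 0 := by
        intro x
        rcases le_total x 0 with h | h
        · rw [max_eq_right h, mul_zero, max_eq_right (mul_nonpos_of_nonneg_of_nonpos hc h)]
        · rw [max_eq_left h, max_eq_left (mul_nonneg hc h)]
      show Real.sqrt (max ((c • t) 0) 0 * max ((c • t) 1) 0)
          = c * Real.sqrt (max (t 0) 0 * max (t 1) 0)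
      have h0 : (c • t) 0 = c * t 0 := rfl
      have h1 : (c • t) 1 = c * t 1 := rfl
      rw [h0, h1, e, e,
        show c * max (t 0) 0 * (c * max (t 1) 0) = c ^ 2 * (max (t 0) 0 * max (t 1) 0) by ring,
        Real.sqrt_mul (sq_nonneg c), Real.sqrt_sq hc]
  -- 0 ≤lex Φ F
  have h0F : lexLe 0 (Φ F) := by
    have h := hmono 0 F hm0 hmF (fun t => Real.sqrt_nonneg _)
    rwa [hΦ0] at h
  -- (Φ F).1 ≤ ε for every ε > 0, by AM-GM
  have hupper : ∀ ε : ℝ, 0 < ε → (Φ F).1 ≤ ε := by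
    intro ε hε
    have hmg : MemHn (ε • Q1 + (4 * ε)⁻¹ • Q2) :=
      memHn_add (memHn_smul _ hmQ1) (memHn_smul _ hmQ2)
    have hΦg : Φ (ε • Q1 + (4 * ε)⁻¹ • Q2) = ((ε, (4 * ε)⁻¹) : ℝ × ℝ) := by
      rw [hadd _ _ (memHn_smul _ hmQ1) (memHn_smul _ hmQ2),
        hsmul _ _ hmQ1, hsmul _ _ hmQ2, hΦQ1, hΦQ2]
      simp [Prod.smul_mk, Prod.mk_add_mk]
    have hle : ∀ t, F t ≤ (ε • Q1 + (4 * ε)⁻¹ • Q2) t := by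
      intro t
      have hgt : (ε • Q1 + (4 * ε)⁻¹ • Q2) t
          = ε * max (t 0) 0 + (4 * ε)⁻¹ * max (t 1) 0 := by
        show ε * Q1 t + (4 * ε)⁻¹ * Q2 t = _
        rw [hQ1t t, hQ2t t]
      rw [hgt]
      have hx : (0:ℝ) ≤ max (t 0) 0 := le_max_right _ _
      have hy : (0:ℝ) ≤ max (t 1) 0 := le_max_right _ _
      have hsq : F t = Real.sqrt (max (t 0) 0) * Real.sqrt (max (t 1) 0) := by
        rw [hFdef]; exact Real.sqrt_mul hx _
      set u := Real.sqrt (max (t 0) 0) with hu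
      set v := Real.sqrt (max (t 1) 0) with hv
      have hux : u ^ 2 = max (t 0) 0 := Real.sq_sqrt hx
      have hvy : v ^ 2 = max (t 1) 0 := Real.sq_sqrt hy
      rw [hsq, ← hux, ← hvy, ← sub_nonneg]
      have key : ε * u ^ 2 + (4 * ε)⁻¹ * v ^ 2 - u * v = (2 * ε * u - v) ^ 2 / (4 * ε) := by
        field_simp
        ring
      rw [key]
      positivity
    have h := hmono F _ hmF hmg hle
    rw [hΦg] at h
    rcases h with h | ⟨h1, _⟩
    · exact le_of_lt h
    · exact le_of_eq h1
  have hF1 : (Φ F).1 = 0 := by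
    rcases h0F with h | ⟨h1, _⟩
    · exfalso
      have h' : (0:ℝ) < (Φ F).1 := by simpa using h
      have := hupper ((Φ F).1 / 2) (by linarith)
      linarith
    · simpa using h1.symm
  have hF2 : 0 ≤ (Φ F).2 := by
    rcases h0F with h | ⟨_, h2⟩
    · exfalso
      have h' : (0:ℝ) < (Φ F).1 := by simpa using h
      rw [hF1] at h'
      exact lt_irrefl _ h'
    · simpa using h2
  set w := (Φ F).2 with hw
  set m := w + 1 with hmdef
  have hm0' : (0:ℝ) < m := by rw [hmdef]; linarith
  -- the truncated function G = min(m² * Q2, Q1)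
  have hmA : MemHn ((m * m) • Q2) := memHn_smul _ hmQ2
  have hΦA : Φ ((m * m) • Q2) = ((0, m * m) : ℝ × ℝ) := by
    rw [hsmul _ _ hmQ2, hΦQ2]
    simp [Prod.smul_mk]
  have hmAB : MemHn ((m * m) • Q2 ⊔ Q1) := memHn_sup hmA hmQ1
  have hΦAB : Φ ((m * m) • Q2 ⊔ Q1) = ((1, 0) : ℝ × ℝ) := by
    rw [hsup _ _ hmA hmQ1, hΦA, hΦQ1, lexSup, if_pos]
    exact Or.inl (by norm_num)
  have hmN : MemHn ((-1 : ℝ) • ((m * m) • Q2 ⊔ Q1)) := memHn_smul _ hmAB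
  have hΦN : Φ ((-1 : ℝ) • ((m * m) • Q2 ⊔ Q1)) = ((-1, 0) : ℝ × ℝ) := by
    rw [hsmul _ _ hmAB, hΦAB]
    simp [Prod.smul_mk]
  set G : (Fin 2 → ℝ) → ℝ :=
    (m * m) • Q2 + Q1 + (-1 : ℝ) • ((m * m) • Q2 ⊔ Q1) with hGdef
  have hmG : MemHn G := memHn_add (memHn_add hmA hmQ1) hmN
  have hΦG : Φ G = ((0, m * m) : ℝ × ℝ) := by
    rw [hGdef, hadd _ _ (memHn_add hmA hmQ1) hmN, hadd _ _ hmA hmQ1, hΦA, hΦQ1, hΦN]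
    simp [Prod.mk_add_mk]
  have hmmF : MemHn (m • F) := memHn_smul _ hmF
  have hΦmF : Φ (m • F) = ((0, m * w) : ℝ × ℝ) := by
    rw [hsmul _ _ hmF]
    have hFeq : Φ F = ((0, w) : ℝ × ℝ) := Prod.ext hF1 rfl
    rw [hFeq]
    simp [Prod.smul_mk]
  -- the key pointwise inequality G ≤ m • F
  have hleG : ∀ t, G t ≤ (m • F) t := by
    intro t
    have hx : (0:ℝ) ≤ max (t 0) 0 := le_max_right _ _
    have hy : (0:ℝ) ≤ max (t 1) 0 := le_max_right _ _
    set x := max (t 0) 0 with hxdef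
    set y := max (t 1) 0 with hydef
    have hGt : G t = min (m * m * y) x := by
      show (m * m) * Q2 t + Q1 t + (-1) * ((m * m) * Q2 t ⊔ Q1 t) = _
      rw [hQ1t t, hQ2t t, ← hxdef, ← hydef]
      rcases le_total (m * m * y) x with h | h
      · rw [max_eq_right h, min_eq_left h]; ring
      · rw [max_eq_left h, min_eq_right h]; ring
    have hmFt : (m • F) t = m * Real.sqrt (x * y) := rfl
    rw [hGt, hmFt]
    rcases le_total (m * m * y) x with h | h
    · rw [min_eq_left h]
      have hmy : (0:ℝ) ≤ m * y := mul_nonneg hm0'.le hy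
      have key : m * y ≤ Real.sqrt (x * y) := by
        have h1 : m * y = Real.sqrt ((m * y) ^ 2) := (Real.sqrt_sq hmy).symm
        rw [h1]
        apply Real.sqrt_le_sqrt
        nlinarith
      calc m * m * y = m * (m * y) := by ring
        _ ≤ m * Real.sqrt (x * y) := mul_le_mul_of_nonneg_left key hm0'.le
    · rw [min_eq_right h]
      calc x = Real.sqrt (x ^ 2) := (Real.sqrt_sq hx).symm
        _ ≤ Real.sqrt (m ^ 2 * (x * y)) := Real.sqrt_le_sqrt (by nlinarith)
        _ = m * Real.sqrt (x * y) := by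
            rw [Real.sqrt_mul (sq_nonneg m), Real.sqrt_sq hm0'.le]
  -- conclude
  have hfin := hmono G (m • F) hmG hmmF hleG
  rw [hΦG, hΦmF] at hfin
  rcases hfin with h | ⟨_, h2⟩
  · exact absurd (by simpa using h) (lt_irrefl (0:ℝ))
  · have h2' : m * m ≤ m * w := by simpa using h2
    have hmw : m ≤ w := (mul_le_mul_iff_right₀ hm0').mp h2'
    rw [hmdef] at hmw
    linarith
end
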